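/- For all real t with 0 < t < π/2, 3π·sin t + ((5π − 12)·(sin t)⁴ − π)·arctan(sin t) − 2π·t > 0. -/

import Mathlib

/-!
Put `x = sin t`, so that `t = arcsin x` and the claim says that
`F x = 3πx + ((5π - 12)x⁴ - π) arctan x - 2π arcsin x` is positive on `(0, 1)`.
`F` vanishes at both ends: like `(5π - 12 - 7π/20) x⁵` at `0`, and like `2π √(1 - x²)` at `1`.

For `x ≤ 0.97` the Taylor bounds `x - x³/3 ≤ arctan x ≤ x - x³/3 + x⁵/5` and
`arcsin x ≤ x + x³/6 + x⁵/4` leave `x⁵ ((5π - 12)(1 - x²/3) - 7π/10) > 0`; the bound on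
`arcsin` amounts to `x ≤ sin (x + x³/6 + x⁵/4)`, which the degree-7 Taylor bound for `sin`
certifies. For `x ≥ 0.97` the coefficient of `arctan x` is positive, and
`arctan x ≥ π/4 - (1 - x)`, `arcsin x ≤ π/2 - √(1 - x²)` leave `2π √(1 - x²) - O(1 - x)`,
positive since `1 - x ≤ (1 - x²)/1.97`.
-/

open Real

lemma le_of_hasDerivAt_le_of_le {f g f' g' : ℝ → ℝ} {a x : ℝ}
    (hf : ∀ y, HasDerivAt f (f' y) y) (hg : ∀ y, HasDerivAt g (g' y) y)
    (ha : f a ≤ g a) (hle : ∀ y, a < y → f' y ≤ g' y) (hx : a ≤ x) : f x ≤ g x := by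
  have hmono : MonotoneOn (g - f) (Set.Ici a) := by
    refine monotoneOn_of_hasDerivWithinAt_nonneg (convex_Ici a)
      (fun y _ ↦ ((hg y).sub (hf y)).continuousAt.continuousWithinAt)
      (fun y _ ↦ ((hg y).sub (hf y)).hasDerivWithinAt) fun y hy ↦ ?_
    rw [interior_Ici] at hy
    exact sub_nonneg.2 (hle y hy)
  have := hmono Set.self_mem_Ici hx hx
  simp only [Pi.sub_apply] at this
  linarith

lemma cos_le_quartic_taylor {x : ℝ} (hx : 0 ≤ x) : cos x ≤ 1 - x^2/2 + x^4/24 := by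
  have hg (y : ℝ) : HasDerivAt (fun y ↦ 1 - y^2/2 + y^4/24) (-(y - y^3/6)) y :=
    (((hasDerivAt_pow 2 y).div_const 2).const_sub 1).add
      ((hasDerivAt_pow 4 y).div_const 24) |>.congr_deriv (by ring)
  refine le_of_hasDerivAt_le_of_le hasDerivAt_cos hg (by norm_num) (fun y hy ↦ ?_) hx
  linarith [sin_ge_sub_cube hy.le]

lemma sin_le_quintic_taylor {x : ℝ} (hx : 0 ≤ x) : sin x ≤ x - x^3/6 + x^5/120 := by
  have hg (y : ℝ) : HasDerivAt (fun y ↦ y - y^3/6 + y^5/120) (1 - y^2/2 + y^4/24) y :=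
    ((hasDerivAt_id y).sub ((hasDerivAt_pow 3 y).div_const 6)).add
      ((hasDerivAt_pow 5 y).div_const 120) |>.congr_deriv (by ring)
  exact le_of_hasDerivAt_le_of_le hasDerivAt_sin hg (by norm_num)
    (fun y hy ↦ cos_le_quartic_taylor hy.le) hx

lemma sextic_taylor_le_cos {x : ℝ} (hx : 0 ≤ x) : 1 - x^2/2 + x^4/24 - x^6/720 ≤ cos x := by
  have hf (y : ℝ) : HasDerivAt (fun y ↦ 1 - y^2/2 + y^4/24 - y^6/720)
      (-(y - y^3/6 + y^5/120)) y :=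
    ((((hasDerivAt_pow 2 y).div_const 2).const_sub 1).add
      ((hasDerivAt_pow 4 y).div_const 24)).sub
      ((hasDerivAt_pow 6 y).div_const 720) |>.congr_deriv (by ring)
  refine le_of_hasDerivAt_le_of_le hf hasDerivAt_cos (by norm_num) (fun y hy ↦ ?_) hx
  linarith [sin_le_quintic_taylor hy.le]

lemma septic_taylor_le_sin {x : ℝ} (hx : 0 ≤ x) :
    x - x^3/6 + x^5/120 - x^7/5040 ≤ sin x := by
  have hf (y : ℝ) : HasDerivAt (fun y ↦ y - y^3/6 + y^5/120 - y^7/5040)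
      (1 - y^2/2 + y^4/24 - y^6/720) y :=
    (((hasDerivAt_id y).sub ((hasDerivAt_pow 3 y).div_const 6)).add
      ((hasDerivAt_pow 5 y).div_const 120)).sub
      ((hasDerivAt_pow 7 y).div_const 5040) |>.congr_deriv (by ring)
  exact le_of_hasDerivAt_le_of_le hf hasDerivAt_sin (by norm_num)
    (fun y hy ↦ sextic_taylor_le_cos hy.le) hx

lemma cubic_taylor_le_arctan {x : ℝ} (hx : 0 ≤ x) : x - x^3/3 ≤ arctan x := by
  have hf (y : ℝ) : HasDerivAt (fun y ↦ y - y^3/3) (1 - y^2) y :=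
    (hasDerivAt_id y).sub ((hasDerivAt_pow 3 y).div_const 3) |>.congr_deriv (by ring)
  refine le_of_hasDerivAt_le_of_le hf hasDerivAt_arctan (by simp) (fun y _ ↦ ?_) hx
  rw [le_div_iff₀ (by positivity)]
  nlinarith [sq_nonneg (y^2)]

lemma arctan_le_quintic_taylor {x : ℝ} (hx : 0 ≤ x) : arctan x ≤ x - x^3/3 + x^5/5 := by
  have hg (y : ℝ) : HasDerivAt (fun y ↦ y - y^3/3 + y^5/5) (1 - y^2 + y^4) y :=
    ((hasDerivAt_id y).sub ((hasDerivAt_pow 3 y).div_const 3)).add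
      ((hasDerivAt_pow 5 y).div_const 5) |>.congr_deriv (by ring)
  refine le_of_hasDerivAt_le_of_le hasDerivAt_arctan hg (by simp) (fun y _ ↦ ?_) hx
  rw [div_le_iff₀ (by positivity)]
  nlinarith [sq_nonneg (y^3)]

lemma antitone_arctan_sub_id : Antitone fun x ↦ arctan x - x :=
  antitone_of_hasDerivAt_nonpos (fun x ↦ (hasDerivAt_arctan x).sub (hasDerivAt_id x))
    fun x ↦ by
      simp only [Pi.zero_apply, sub_nonpos]
      rw [div_le_one (by positivity)]
      nlinarith [sq_nonneg x]

lemma arcsin_le_pi_div_two_sub_sqrt (x : ℝ) : arcsin x ≤ π / 2 - √(1 - x^2) := by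
  have := sin_le (sub_nonneg.2 (arcsin_le_pi_div_two x))
  rw [sin_pi_div_two_sub, cos_arcsin] at this
  linarith

lemma le_septic_taylor_comp {x : ℝ} (hx0 : 0 ≤ x) (hx : x ≤ 0.97) :
    let q := x + x^3/6 + x^5/4
    x ≤ q - q^3/6 + q^5/120 - q^7/5040 := by
  intro q
  set s := x^2 with hs
  have hs0 : 0 ≤ s := sq_nonneg x
  have hs1 : s ≤ 0.9409 := by nlinarith
  have hexpand : q - q^3/6 + q^5/120 - q^7/5040 - x = x^5 * (7/40 - 37/280*s - 97/3240*s^2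
      - 361/12960*s^3 + 1/720*s^4 - 101/466560*s^5 + 2789/1866240*s^6 + 9179/33592320*s^7
      + 2519/22044960*s^8 - 1283/67184640*s^9 - 223/29859840*s^10 - 383/59719680*s^11
      - 59/39813120*s^12 - 1/2211840*s^13 - 1/17694720*s^14 - 1/82575360*s^15) := by
    simp only [q, hs]; ring
  rw [← sub_nonneg, hexpand]
  refine mul_nonneg (by positivity) ?_
  -- the coefficient `1/720` of `s⁴` outweighs all the negative terms of higher degree
  have hpow (k : ℕ) (hk : 4 ≤ k) : s^k ≤ s^4 := pow_le_pow_of_le_one hs0 (by linarith) hk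
  linarith [hpow 5 (by norm_num), hpow 9 (by norm_num), hpow 10 (by norm_num),
    hpow 11 (by norm_num), hpow 12 (by norm_num), hpow 13 (by norm_num), hpow 14 (by norm_num),
    hpow 15 (by norm_num), pow_nonneg hs0 4, pow_nonneg hs0 6, pow_nonneg hs0 7,
    pow_nonneg hs0 8, pow_le_pow_left₀ hs0 hs1 2, pow_le_pow_left₀ hs0 hs1 3]

lemma arcsin_le_quintic {x : ℝ} (hx0 : 0 ≤ x) (hx : x ≤ 0.97) :
    arcsin x ≤ x + x^3/6 + x^5/4 := by
  have hq0 : 0 ≤ x + x^3/6 + x^5/4 := by positivity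
  have hq : x + x^3/6 + x^5/4 < π / 2 := by
    have h3 : x^3 ≤ 0.97^3 := pow_le_pow_left₀ hx0 hx 3
    have h5 : x^5 ≤ 0.97^5 := pow_le_pow_left₀ hx0 hx 5
    linarith [pi_gt_three]
  rw [arcsin_le_iff_le_sin' ⟨by linarith [pi_pos], hq⟩]
  exact (le_septic_taylor_comp hx0 hx).trans (septic_taylor_le_sin hq0)

lemma chen_poly_pos_near_one {u c : ℝ} (hu0 : 0 ≤ u) (hu : u ≤ 0.03) (hc0 : 0 < c)
    (hc : c^2 = u * (2 - u)) :
    0 < ((5*π - 12)*(1 - u)^4 - π)*(π/4 - u) + 3*π*(1 - u) - 2*π*(π/2 - c) := by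
  have hπ : 3.14 < π := pi_gt_d2
  have hπ' : π < 3.15 := pi_lt_d2
  set W := 5*π^2 - 5*π - 12 - u*(5*π - 12)*(4 + 3*π/2) + u^2*(5*π - 12)*(6 + π)
    - u^3*(5*π - 12)*(4 + π/4) + u^4*(5*π - 12) with hW
  have hexpand : ((5*π - 12)*(1 - u)^4 - π)*(π/4 - u) + 3*π*(1 - u) - 2*π*(π/2 - c)
      = 2*π*c - u*W := by
    rw [hW]; ring
  have hW_le : W ≤ 30 := by
    nlinarith [mul_nonneg hu0 hu0, pow_nonneg hu0 3, pow_le_one₀ (n := 4) hu0 (by linarith)]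
  -- `u ≤ c²/1.97` and `c ≤ 1/4`, so `u W ≤ 4 c < 2π c`
  have hu_le : 1.97 * u ≤ c^2 := by nlinarith
  have hc_le : c ≤ 1/4 := by nlinarith
  rw [hexpand]
  nlinarith [mul_le_mul_of_nonneg_left hW_le hu0]

noncomputable def chenGap (x : ℝ) : ℝ :=
  3*π*x + ((5*π - 12)*x^4 - π)*arctan x - 2*π*arcsin x

lemma chenGap_pos_of_le {x : ℝ} (hx0 : 0 < x) (hx : x ≤ 0.97) : 0 < chenGap x := by
  have hπ : 3.14 < π := pi_gt_d2
  have hA : 0 ≤ (5*π - 12) * x^4 := by nlinarith [pow_nonneg hx0.le 4]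
  have harctan_lo := mul_le_mul_of_nonneg_left (cubic_taylor_le_arctan hx0.le) hA
  have harctan_hi := mul_le_mul_of_nonneg_left (arctan_le_quintic_taylor hx0.le) pi_pos.le
  have harcsin := mul_le_mul_of_nonneg_left (arcsin_le_quintic hx0.le hx) pi_pos.le
  have hx2 : x^2 ≤ 0.9409 := by nlinarith
  calc 0 < x^5 * ((5*π - 12) * (1 - x^2/3) - 7*π/10) := by
        refine mul_pos (by positivity) ?_
        nlinarith
    _ = 3*π*x + (5*π - 12)*x^4*(x - x^3/3) - π*(x - x^3/3 + x^5/5)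
          - 2*π*(x + x^3/6 + x^5/4) := by ring
    _ ≤ chenGap x := by unfold chenGap; linarith

lemma chenGap_pos_of_ge {x : ℝ} (hx : 0.97 ≤ x) (hx1 : x < 1) : 0 < chenGap x := by
  have harctan : π/4 - (1 - x) ≤ arctan x := by
    have := antitone_arctan_sub_id hx1.le
    simp only [arctan_one] at this
    linarith
  have hB : 0 ≤ (5*π - 12)*x^4 - π := by
    have hx4 : 0.885 ≤ x^4 := by
      have := pow_le_pow_left₀ (by norm_num) hx 4
      norm_num at this ⊢; linarith
    nlinarith [pi_gt_d2]
  have hpoly := chen_poly_pos_near_one (u := 1 - x) (c := √(1 - x^2)) (by linarith)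
    (by linarith) (sqrt_pos.2 (by nlinarith)) (by rw [sq_sqrt (by nlinarith)]; ring)
  rw [sub_sub_cancel] at hpoly
  unfold chenGap
  linarith [mul_le_mul_of_nonneg_left harctan hB,
    mul_le_mul_of_nonneg_left (arcsin_le_pi_div_two_sub_sqrt x) pi_pos.le]

lemma chenGap_pos {x : ℝ} (hx0 : 0 < x) (hx1 : x < 1) : 0 < chenGap x := by
  rcases le_or_gt x 0.97 with hx | hx
  · exact chenGap_pos_of_le hx0 hx
  · exact chenGap_pos_of_ge hx.le hx1

theorem stmt5 (t : ℝ) (h1 : 0 < t) (h2 : t < π/2) :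
    3*π*sin t + ((5*π - 12)*(sin t)^4 - π)*arctan (sin t) - 2*π*t > 0 := by
  have hsin_pos : 0 < sin t := sin_pos_of_pos_of_lt_pi h1 (by linarith [pi_pos])
  have hsin_lt_one : sin t < 1 := by
    simpa using sin_lt_sin_of_lt_of_le_pi_div_two (by linarith) le_rfl h2
  have := chenGap_pos hsin_pos hsin_lt_one
  rwa [chenGap, arcsin_sin (by linarith) h2.le] at this
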